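/- arXiv:1009.2929 — 3 statements merged into one kernel-verified Lean document; each statement's English description precedes it below -/
import Mathlib

section
/- For all integers m, n ≥ 0, B_{m+n}(x) = Σ_{k=0}^{m} S(m,k) x^k Σ_{j=0}^{n} C(n,j) B_j(x) k^{n-j} as polynomials in x (the polynomial Spivey identity). -/
open Polynomial Finset

/-- Stirling numbers of the second kind. -/
def stirling2 : ℕ → ℕ → ℕ
  | 0, 0 => 1
  | 0, _ + 1 => 0
  | _ + 1, 0 => 0
  | n + 1, k + 1 => (k + 1) * stirling2 n (k + 1) + stirling2 n k

/-- Signed Stirling numbers of the first kind. -/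
def stirling1 : ℕ → ℕ → ℤ
  | 0, 0 => 1
  | 0, _ + 1 => 0
  | n + 1, 0 => -(n : ℤ) * stirling1 n 0
  | n + 1, k + 1 => stirling1 n k - (n : ℤ) * stirling1 n (k + 1)

/-- The Bell polynomial `B_m(x) = ∑_{j=0}^m S(m,j) x^j` over `ℤ`. -/
noncomputable def bellPoly (m : ℕ) : Polynomial ℤ :=
  ∑ j ∈ range (m + 1), (stirling2 m j : ℤ) • X ^ j

/-- The derangement polynomial `D_m(x) = ∑_{j=0}^m C(m,j) j! (x-1)^{m-j}` over `ℤ`. -/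
noncomputable def derPoly (m : ℕ) : Polynomial ℤ :=
  ∑ j ∈ range (m + 1), ((m.choose j * j.factorial : ℕ) : ℤ) • (X - 1) ^ (m - j)

/-- The Bell numbers `B_m = ∑_j S(m,j)`. -/
def bell (m : ℕ) : ℕ := ∑ j ∈ range (m + 1), stirling2 m j

lemma stirling2_eq_zero : ∀ {m k : ℕ}, m < k → stirling2 m k = 0
  | 0, _ + 1, _ => rfl
  | m + 1, k + 1, h => by
    have h' : m < k := Nat.lt_of_succ_lt_succ h
    simp [stirling2, stirling2_eq_zero h', stirling2_eq_zero (Nat.lt_of_lt_of_le h' (Nat.le_succ k))]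

lemma bellPoly_succ (m : ℕ) :
    bellPoly (m + 1) = X * (bellPoly m + derivative (bellPoly m)) := by
  unfold bellPoly
  rw [derivative_sum, mul_add, Finset.mul_sum, Finset.mul_sum]
  have h1 : ∀ j ∈ range (m+1), X * ((stirling2 m j : ℤ) • X ^ j) = (stirling2 m j : ℤ) • (X ^ (j+1) : Polynomial ℤ) := by
    intro j _; rw [mul_smul_comm, ← pow_succ']
  have h2 : ∀ j ∈ range (m+1), X * derivative ((stirling2 m j : ℤ) • X ^ j)
      = ((j : ℤ) * stirling2 m j) • (X ^ j : Polynomial ℤ) := by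
    intro j _
    rw [derivative_smul, derivative_X_pow, mul_smul_comm]
    cases j with
    | zero => simp
    | succ i => rw [mul_smul]; simp; ring
  rw [Finset.sum_congr rfl h1, Finset.sum_congr rfl h2]
  rw [Finset.sum_range_succ' (fun j => (stirling2 (m+1) j : ℤ) • X ^ j)]
  have hz : stirling2 (m+1) 0 = 0 := rfl
  rw [hz]
  simp only [Nat.cast_zero, zero_smul, add_zero, pow_zero]
  have h3 : ∀ j ∈ range (m+1), (stirling2 (m+1) (j+1) : ℤ) • X ^ (j+1)
      = (stirling2 m j : ℤ) • (X ^ (j+1) : Polynomial ℤ) + (((j:ℤ)+1) * stirling2 m (j+1)) • (X ^ (j+1) : Polynomial ℤ) := by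
    intro j _
    show ((((j+1) * stirling2 m (j+1) + stirling2 m j : ℕ)) : ℤ) • X^(j+1) = _
    push_cast
    rw [← add_smul]; ring_nf
  rw [Finset.sum_congr rfl h3, Finset.sum_add_distrib]
  congr 1
  -- Σ_{j∈range(m+1)} ((j+1) S(m,j+1)) • X^{j+1} = Σ_{j∈range(m+1)} (j S(m,j)) • X^j
  rw [Finset.sum_range_succ' (fun j => ((j : ℤ) * stirling2 m j) • X ^ j)]
  rw [Finset.sum_range_succ]
  simp [stirling2_eq_zero (Nat.lt_succ_self m)]

lemma bellPoly_zero : bellPoly 0 = 1 := by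
  simp [bellPoly, stirling2]

lemma inner_step (n k : ℕ) :
    (k : Polynomial ℤ) * (∑ j ∈ range (n + 1), (n.choose j : ℤ) • (bellPoly j * (k : Polynomial ℤ) ^ (n - j)))
      + X * ((∑ j ∈ range (n + 1), (n.choose j : ℤ) • (bellPoly j * (k : Polynomial ℤ) ^ (n - j)))
        + derivative (∑ j ∈ range (n + 1), (n.choose j : ℤ) • (bellPoly j * (k : Polynomial ℤ) ^ (n - j))))
    = ∑ j ∈ range (n + 1 + 1), ((n+1).choose j : ℤ) • (bellPoly j * (k : Polynomial ℤ) ^ (n + 1 - j)) := by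
  have hP' : derivative (∑ j ∈ range (n + 1), (n.choose j : ℤ) • (bellPoly j * (k : Polynomial ℤ) ^ (n - j)))
      = ∑ j ∈ range (n + 1), (n.choose j : ℤ) • (derivative (bellPoly j) * (k : Polynomial ℤ) ^ (n - j)) := by
    rw [derivative_sum]
    refine Finset.sum_congr rfl fun j _ => ?_
    rw [derivative_smul, derivative_mul]
    have hc : derivative ((k : Polynomial ℤ) ^ (n - j)) = 0 := by
      rw [← C_eq_natCast, ← C_pow, derivative_C]
    rw [hc]
    simp
  rw [hP']
  have h1 : (k : Polynomial ℤ) * (∑ j ∈ range (n + 1), (n.choose j : ℤ) • (bellPoly j * (k : Polynomial ℤ) ^ (n - j)))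
      = ∑ j ∈ range (n + 1), (n.choose j : ℤ) • (bellPoly j * (k : Polynomial ℤ) ^ (n + 1 - j)) := by
    rw [Finset.mul_sum]
    refine Finset.sum_congr rfl fun j hj => ?_
    have hjn : j ≤ n := Nat.lt_succ_iff.mp (Finset.mem_range.mp hj)
    rw [Nat.succ_sub hjn, mul_smul_comm, pow_succ]
    congr 1
    ring
  have h2 : X * ((∑ j ∈ range (n + 1), (n.choose j : ℤ) • (bellPoly j * (k : Polynomial ℤ) ^ (n - j)))
        + ∑ j ∈ range (n + 1), (n.choose j : ℤ) • (derivative (bellPoly j) * (k : Polynomial ℤ) ^ (n - j)))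
      = ∑ j ∈ range (n + 1), (n.choose j : ℤ) • (bellPoly (j+1) * (k : Polynomial ℤ) ^ (n - j)) := by
    rw [← Finset.sum_add_distrib, Finset.mul_sum]
    refine Finset.sum_congr rfl fun j _ => ?_
    rw [← smul_add, mul_smul_comm]
    congr 1
    rw [bellPoly_succ]
    ring
  rw [h1, h2]
  -- now the reindexing on the RHS
  rw [Finset.sum_range_succ'
    (fun j => (((n+1).choose j : ℤ)) • (bellPoly j * (k : Polynomial ℤ) ^ (n + 1 - j)))]
  have h3 : ∀ i ∈ range (n+1),
      (((n+1).choose (i+1) : ℤ)) • (bellPoly (i+1) * (k : Polynomial ℤ) ^ (n + 1 - (i+1)))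
      = (n.choose i : ℤ) • (bellPoly (i+1) * (k : Polynomial ℤ) ^ (n - i))
        + (n.choose (i+1) : ℤ) • (bellPoly (i+1) * (k : Polynomial ℤ) ^ (n - i)) := by
    intro i _
    rw [Nat.succ_sub_succ, Nat.choose_succ_succ]
    push_cast
    rw [add_smul]
  rw [Finset.sum_congr rfl h3, Finset.sum_add_distrib]
  have h4 : ∑ j ∈ range (n + 1), (n.choose j : ℤ) • (bellPoly j * (k : Polynomial ℤ) ^ (n + 1 - j))
      = (∑ i ∈ range (n+1), (n.choose (i+1) : ℤ) • (bellPoly (i+1) * (k : Polynomial ℤ) ^ (n - i)))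
        + ((n+1).choose 0 : ℤ) • (bellPoly 0 * (k : Polynomial ℤ) ^ (n + 1 - 0)) := by
    have : ∑ j ∈ range (n + 1), (n.choose j : ℤ) • (bellPoly j * (k : Polynomial ℤ) ^ (n + 1 - j))
        = ∑ j ∈ range (n + 2), (n.choose j : ℤ) • (bellPoly j * (k : Polynomial ℤ) ^ (n + 1 - j)) := by
      symm
      rw [Finset.sum_range_succ, Nat.choose_succ_self]
      simp
    rw [this, Finset.sum_range_succ'
      (fun j => ((n.choose j : ℤ)) • (bellPoly j * (k : Polynomial ℤ) ^ (n + 1 - j)))]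
    simp [Nat.succ_sub_succ]
  rw [h4]
  ring

lemma Xmul_key (k : ℕ) (P : Polynomial ℤ) :
    X * (X ^ k * P + derivative (X ^ k * P))
      = X ^ k * ((k : Polynomial ℤ) * P + X * (P + derivative P)) := by
  rw [derivative_mul, derivative_X_pow]
  cases k with
  | zero => simp
  | succ i =>
    rw [C_eq_natCast]
    push_cast
    ring

theorem bellPoly_spivey (m n : ℕ) :
    bellPoly (m + n) =
      ∑ k ∈ range (m + 1), (stirling2 m k : ℤ) • (X ^ k *
        ∑ j ∈ range (n + 1), (n.choose j : ℤ) • (bellPoly j * (k : Polynomial ℤ) ^ (n - j))) := by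
  induction n with
  | zero =>
    simp only [Nat.add_zero, zero_add, range_one, Finset.sum_singleton, Nat.choose_self,
      Nat.cast_one, one_smul, Nat.sub_zero, pow_zero, bellPoly_zero, one_mul, mul_one]
    rfl
  | succ n ih =>
    rw [show m + (n + 1) = (m + n) + 1 from rfl, bellPoly_succ, ih, derivative_sum,
      ← Finset.sum_add_distrib, Finset.mul_sum]
    refine Finset.sum_congr rfl fun k _ => ?_
    rw [derivative_smul, ← smul_add, mul_smul_comm]
    congr 1
    rw [Xmul_key, inner_step]
end

section
/- For every integer m ≥ 1, B_{m-1}(x) = Σ_{k=1}^{m} S(m,k) (-1)^{k-1} D_{k-1}(1-x) as polynomials in x. -/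
/-!
Put `Q d = (-1)^d D_d(1 - x)`. Peeling off the `j = 0` term of `D_{d+1}` gives
`D_{d+1}(y) = (y - 1)^{d+1} + (d + 1) D_d(y)`, i.e. `Q_d + d Q_{d-1} = x^d`. Feeding the recurrence
`S(n+1, k+1) = (k+1) S(n, k+1) + S(n, k)` into `∑_k S(n+1, k+1) Q_k` and shifting the index of the
first part turns it into `∑_k S(n, k) (Q_k + k Q_{k-1}) = ∑_k S(n, k) x^k = B_n(x)`.
-/

open Polynomial Finset

theorem stirling2_eq_zero_of_lt : ∀ {n k : ℕ}, n < k → stirling2 n k = 0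
  | 0, _ + 1, _ => rfl
  | n + 1, k + 1, h => by
    simp only [stirling2, stirling2_eq_zero_of_lt (by omega : n < k + 1),
      stirling2_eq_zero_of_lt (by omega : n < k), mul_zero, add_zero]

theorem sum_range_stirling2_succ_succ_smul {M : Type*} [AddCommMonoid M] (n : ℕ) (Q : ℕ → M) :
    ∑ k ∈ range (n + 1), stirling2 (n + 1) (k + 1) • Q k =
      ∑ k ∈ range (n + 1), stirling2 n k • (Q k + k • Q (k - 1)) := by
  have hshift : ∑ k ∈ range (n + 1), stirling2 n k • k • Q (k - 1) =
      ∑ k ∈ range (n + 1), ((k + 1) * stirling2 n (k + 1)) • Q k := by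
    rw [sum_range_succ', sum_range_succ _ n, stirling2_eq_zero_of_lt (Nat.lt_succ_self n)]
    simp only [smul_smul, zero_smul, smul_zero, zero_mul, add_zero, add_tsub_cancel_right,
      mul_comm]
  simp only [smul_add, sum_add_distrib, hshift, stirling2, add_smul, add_comm]

theorem derPoly_succ (d : ℕ) : derPoly (d + 1) = (X - 1) ^ (d + 1) + (d + 1 : ℕ) • derPoly d := by
  rw [derPoly, sum_range_succ', derPoly, smul_sum, add_comm]
  congr 1
  · simp
  · refine sum_congr rfl fun j _ => ?_
    rw [Nat.add_sub_add_right, ← natCast_zsmul, smul_smul, Nat.factorial_succ, ← mul_assoc,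
      ← Nat.add_one_mul_choose_eq, mul_assoc, Nat.cast_mul]

theorem neg_one_pow_mul_derPoly_comp_one_sub_X_add (d : ℕ) :
    (-1) ^ d * (derPoly d).comp (1 - X) + d • ((-1) ^ (d - 1) * (derPoly (d - 1)).comp (1 - X)) =
      (X : ℤ[X]) ^ d := by
  cases d with
  | zero => simp [derPoly]
  | succ d =>
    have hsign : (-1 : ℤ[X]) ^ (d + 1) * (-X) ^ (d + 1) = X ^ (d + 1) := by
      rw [← mul_pow, neg_one_mul, neg_neg]
    rw [derPoly_succ, add_comp, nsmul_eq_mul, mul_comp, natCast_comp, pow_comp, sub_comp, X_comp,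
      one_comp, Nat.add_sub_cancel, nsmul_eq_mul]
    linear_combination hsign

theorem bellPoly_eq_stirling2_derPoly (m : ℕ) (hm : 1 ≤ m) :
    bellPoly (m - 1) =
      ∑ k ∈ Icc 1 m, (stirling2 m k : ℤ) • ((-1) ^ (k - 1) * (derPoly (k - 1)).comp (1 - X)) := by
  obtain ⟨n, rfl⟩ : ∃ n, m = n + 1 := ⟨m - 1, by omega⟩
  set Q : ℕ → ℤ[X] := fun d => (-1) ^ d * (derPoly d).comp (1 - X)
  have hreindex : ∑ k ∈ Icc 1 (n + 1), stirling2 (n + 1) k • Q (k - 1) =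
      ∑ k ∈ range (n + 1), stirling2 (n + 1) (k + 1) • Q k := by
    rw [range_eq_Ico]
    exact (sum_Ico_add' (fun k => stirling2 (n + 1) k • Q (k - 1)) 0 (n + 1) 1).symm
  simp only [natCast_zsmul, Nat.add_sub_cancel, bellPoly]
  rw [hreindex, sum_range_stirling2_succ_succ_smul]
  exact sum_congr rfl fun k _ => by rw [neg_one_pow_mul_derPoly_comp_one_sub_X_add]
end

section
/- For any integer m ≥ 1 and any prime p not dividing m, Σ_{k=1}^{p-1} (−m)^{p-1-k} B_{k+1} ≡ (−1)^m D_m (mod p). -/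
open Polynomial Finset

open Nat

/-!
Write `-m = r` in `𝔽_p` with `0 < r < p`. Expanding `B_{k+1} = ∑_j S(k+1, j)` and using
`j! S(n, j) = ∑_i (-1)^i C(j, i) (j - i)^n`, the sum over `k` collapses to geometric sums
`∑_{k=1}^{p-1} r^{p-1-k} x^k`, which in `𝔽_p` equal `-1` at `x = r` and `0` elsewhere.
Together with Wilson's theorem this gives `∑_k r^{p-1-k} S(k+1, j) = r^{(p-j)}` (rising
factorial), so the left side is `∑_{s ≤ p} r^{(s)}`. On the other side
`(-1)^m D_m = ∑_s (-1)^s m(m-1)⋯(m-s+1) = ∑_s (-m)^{(s)}`, and both sums may be cut at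
`s = p - r`, beyond which the rising factorial of `r` contains the factor `p`.
-/

theorem stirling2_eq_stirlingSecond : stirling2 = Nat.stirlingSecond := by
  funext n k
  induction n generalizing k with
  | zero => cases k <;> rfl
  | succ n ih => cases k <;> simp [stirling2, Nat.stirlingSecond_succ_succ, ih]

theorem bell_eq_sum_range_stirlingSecond {n N : ℕ} (h : n ≤ N) :
    bell n = ∑ j ∈ range (N + 1), Nat.stirlingSecond n j := by
  rw [bell, stirling2_eq_stirlingSecond]
  exact sum_subset (range_subset_range.mpr (by omega)) fun j _ hj =>
    Nat.stirlingSecond_eq_zero_of_lt (by simp only [mem_range] at hj; omega)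

theorem sum_neg_one_pow_mul_choose_succ {R : Type*} [CommRing R] (f : ℕ → R) (j : ℕ) :
    ∑ i ∈ range (j + 2), (-1) ^ i * ((j + 1).choose i : R) * f i =
      ∑ i ∈ range (j + 2), (-1) ^ i * (j.choose i : R) * f i -
        ∑ i ∈ range (j + 1), (-1) ^ i * (j.choose i : R) * f (i + 1) := by
  rw [sum_range_succ' _ (j + 1), sum_range_succ' (fun i => (-1) ^ i * (j.choose i : R) * f i)]
  simp only [Nat.choose_succ_succ', Nat.cast_add, Nat.choose_zero_right, pow_succ, mul_add,
    add_mul, sum_add_distrib]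
  simp only [mul_neg_one, neg_mul, sum_neg_distrib]
  ring

theorem Nat.factorial_mul_stirlingSecond {R : Type*} [CommRing R] (n j : ℕ) :
    (j ! : R) * stirlingSecond n j =
      ∑ i ∈ range (j + 1), (-1) ^ i * (j.choose i : R) * ((j - i : ℕ) : R) ^ n := by
  induction n generalizing j with
  | zero =>
    have h := congrArg (Int.cast : ℤ → R) (Int.alternating_sum_range_choose (n := j))
    push_cast at h
    cases j <;> simp_all
  | succ n ih =>
    cases j with
    | zero => simp
    | succ j =>
      have absorb : ∀ i, ((j + 1).choose i : R) * ((j + 1 - i : ℕ) : R) = (j + 1) * j.choose i :=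
        fun i => by
          rw [← Nat.cast_mul, ← Nat.choose_mul_succ_eq, Nat.cast_mul, Nat.cast_succ, mul_comm]
      have hlhs : ((j + 1)! : R) * stirlingSecond (n + 1) (j + 1) = (j + 1) *
          (((j + 1)! : R) * stirlingSecond n (j + 1) + (j ! : R) * stirlingSecond n j) := by
        rw [stirlingSecond_succ_succ, factorial_succ]; push_cast; ring
      have hrhs : ∑ i ∈ range (j + 2),
            (-1) ^ i * ((j + 1).choose i : R) * ((j + 1 - i : ℕ) : R) ^ (n + 1) =
          (j + 1) * ∑ i ∈ range (j + 2), (-1) ^ i * (j.choose i : R) * ((j + 1 - i : ℕ) : R) ^ n := by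
        rw [mul_sum]
        refine sum_congr rfl fun i _ => ?_
        linear_combination ((-1) ^ i * ((j + 1 - i : ℕ) : R) ^ n) * absorb i
      rw [hlhs, hrhs, ih, ih, sum_neg_one_pow_mul_choose_succ (fun i => ((j + 1 - i : ℕ) : R) ^ n)]
      simp only [Nat.add_sub_add_right]
      ring

theorem FiniteField.sum_Icc_pow_mul_pow {K : Type*} [Field K] [Fintype K] [DecidableEq K]
    {a : K} (ha : a ≠ 0) (x : K) :
    ∑ k ∈ Icc 1 (Fintype.card K - 1), a ^ (Fintype.card K - 1 - k) * x ^ k =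
      if x = a then -1 else 0 := by
  set q := Fintype.card K
  have hq : 1 < q := Fintype.one_lt_card
  split_ifs with hxa
  · subst hxa
    have h1 : ∀ k ∈ Icc 1 (q - 1), x ^ (q - 1 - k) * x ^ k = 1 := fun k hk => by
      rw [← pow_add, Nat.sub_add_cancel (mem_Icc.mp hk).2, pow_card_sub_one_eq_one x ha]
    rw [sum_congr rfl h1, sum_const, Nat.card_Icc, nsmul_one, Nat.add_sub_cancel,
      Nat.cast_sub hq.le, cast_card_eq_zero, Nat.cast_one, zero_sub]
  · have hgeom := geom_sum₂_mul x a q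
    rw [pow_card, pow_card] at hgeom
    have hfull := mul_right_cancel₀ (sub_ne_zero.mpr hxa) (hgeom.trans (one_mul _).symm)
    rw [range_eq_Ico, sum_eq_sum_Ico_succ_bot (by omega), pow_zero, one_mul, Nat.sub_zero,
      pow_card_sub_one_eq_one a ha, add_eq_left] at hfull
    rw [show Icc 1 (q - 1) = Ico 1 q by ext; simp only [mem_Icc, mem_Ico]; omega, ← hfull]
    exact sum_congr rfl fun k _ => mul_comm _ _

theorem ZMod.factorial_mul_factorial_sub {p : ℕ} [Fact p.Prime] :
    ∀ t ≤ p - 1, ((t ! * (p - 1 - t)! : ℕ) : ZMod p) = (-1) ^ (t + 1)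
  | 0, _ => by simp [ZMod.wilsons_lemma]
  | t + 1, ht => by
    have ih := ZMod.factorial_mul_factorial_sub (p := p) t (by omega)
    have hsplit : p - 1 - t = (p - 1 - (t + 1)) + 1 := by omega
    have hcast : ((p - 1 - t : ℕ) : ZMod p) = -((t + 1 : ℕ) : ZMod p) := by
      rw [eq_neg_iff_add_eq_zero, ← Nat.cast_add, show p - 1 - t + (t + 1) = p by omega,
        ZMod.natCast_self]
    rw [hsplit, Nat.factorial_succ, ← hsplit] at ih
    rw [Nat.factorial_succ]
    push_cast at ih hcast ⊢
    rw [hcast] at ih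
    linear_combination (-1 : ZMod p) * ih

theorem Nat.dvd_ascFactorial_of_le_of_lt {r s p : ℕ} (hrp : r ≤ p) (hps : p < r + s) :
    p ∣ r.ascFactorial s := by
  rw [ascFactorial_eq_prod_range]
  simpa [Nat.add_sub_cancel' hrp] using
    dvd_prod_of_mem (fun i => r + i) (mem_range.mpr (by omega : p - r < s))

section ZModPrime

variable {p : ℕ} [Fact p.Prime]

theorem ZMod.natCast_factorial_ne_zero {n : ℕ} (hn : n < p) : (n ! : ZMod p) ≠ 0 := by
  rw [Ne, ZMod.natCast_eq_zero_iff, (Fact.out : p.Prime).dvd_factorial]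
  omega

theorem factorial_mul_sum_pow_mul_stirlingSecond {r j : ℕ} (hr : 0 < r) (hrp : r < p)
    (hjp : j < p) :
    (j ! : ZMod p) * ∑ k ∈ Icc 1 (p - 1), (r : ZMod p) ^ (p - 1 - k) * stirlingSecond (k + 1) j =
      if r ≤ j then -((-1) ^ (j - r) * (j.choose r : ZMod p) * r) else 0 := by
  have hr0 : (r : ZMod p) ≠ 0 := by
    rw [Ne, ZMod.natCast_eq_zero_iff]; exact fun h => by have := Nat.le_of_dvd hr h; omega
  have hgeom (x : ZMod p) : ∑ k ∈ Icc 1 (p - 1), (r : ZMod p) ^ (p - 1 - k) * x ^ k =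
      if x = r then -1 else 0 := by
    simpa [ZMod.card] using FiniteField.sum_Icc_pow_mul_pow hr0 x
  have hcast {i : ℕ} : ((j - i : ℕ) : ZMod p) = r ↔ j - i = r := by
    rw [ZMod.natCast_eq_natCast_iff', Nat.mod_eq_of_lt (by omega), Nat.mod_eq_of_lt hrp]
  calc (j ! : ZMod p) * ∑ k ∈ Icc 1 (p - 1), (r : ZMod p) ^ (p - 1 - k) * stirlingSecond (k + 1) j
      = ∑ i ∈ range (j + 1), (-1) ^ i * (j.choose i : ZMod p) * ((j - i : ℕ) : ZMod p) *
          ∑ k ∈ Icc 1 (p - 1), (r : ZMod p) ^ (p - 1 - k) * ((j - i : ℕ) : ZMod p) ^ k := by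
        simp only [mul_sum, mul_left_comm (j ! : ZMod p), Nat.factorial_mul_stirlingSecond]
        rw [sum_comm]
        refine sum_congr rfl fun i _ => sum_congr rfl fun k _ => ?_
        ring
    _ = ∑ i ∈ range (j + 1), if j - i = r then -((-1) ^ i * (j.choose i : ZMod p) * r) else 0 := by
        refine sum_congr rfl fun i _ => ?_
        rw [hgeom]
        simp only [hcast]
        split_ifs with h
        · rw [h]; ring
        · ring
    _ = _ := by
        split_ifs with hrj
        · rw [sum_eq_single_of_mem (j - r) (mem_range.mpr (by omega))
            (fun i _ hi => if_neg (by omega)), if_pos (by omega), Nat.choose_symm hrj]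
        · exact sum_eq_zero fun i _ => if_neg (by omega)

theorem factorial_mul_ascFactorial_sub {r j : ℕ} (hr : 0 < r) (hrp : r < p) (hjp : j < p) :
    (j ! : ZMod p) * r.ascFactorial (p - j) =
      if r ≤ j then -((-1) ^ (j - r) * (j.choose r : ZMod p) * r) else 0 := by
  split_ifs with hrj
  · set t := j - r
    have hasc : (r - 1)! * r.ascFactorial (p - j) = (p - 1 - t)! := by
      have h := Nat.factorial_mul_ascFactorial (r - 1) (p - j)
      rwa [Nat.sub_add_cancel hr, show r - 1 + (p - j) = p - 1 - t by omega] at h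
    have hchoose : j.choose r * t ! * (r - 1)! * r = j ! := by
      rw [mul_assoc _ (r - 1)!, mul_comm (r - 1)! r, Nat.mul_factorial_pred hr.ne', mul_right_comm,
        Nat.choose_mul_factorial_mul_factorial hrj]
    have hwilson := ZMod.factorial_mul_factorial_sub (p := p) t (by omega)
    have hG : ((t ! * (r - 1)! : ℕ) : ZMod p) ≠ 0 := by
      push_cast
      exact mul_ne_zero (ZMod.natCast_factorial_ne_zero (by omega))
        (ZMod.natCast_factorial_ne_zero (by omega))
    apply mul_left_cancel₀ hG
    have hasc' := congrArg (Nat.cast : ℕ → ZMod p) hasc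
    have hchoose' := congrArg (Nat.cast : ℕ → ZMod p) hchoose
    push_cast at hasc' hchoose' hwilson ⊢
    linear_combination ((j ! : ZMod p) * t !) * hasc' + (j ! : ZMod p) * hwilson +
      (-1) ^ t * hchoose'
  · rw [(ZMod.natCast_eq_zero_iff _ p).mpr (Nat.dvd_ascFactorial_of_le_of_lt hrp.le (by omega)),
      mul_zero]

theorem sum_pow_mul_stirlingSecond {r j : ℕ} (hr : 0 < r) (hrp : r < p) (hjp : j ≤ p) :
    ∑ k ∈ Icc 1 (p - 1), (r : ZMod p) ^ (p - 1 - k) * stirlingSecond (k + 1) j =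
      r.ascFactorial (p - j) := by
  rcases hjp.lt_or_eq with hjp | hjp
  · exact mul_left_cancel₀ (ZMod.natCast_factorial_ne_zero hjp)
      ((factorial_mul_sum_pow_mul_stirlingSecond hr hrp hjp).trans
        (factorial_mul_ascFactorial_sub hr hrp hjp).symm)
  · subst j
    have hp := (Fact.out : p.Prime).one_lt
    rw [sum_eq_single_of_mem (p - 1) (mem_Icc.mpr ⟨by omega, le_rfl⟩), Nat.sub_self,
      Nat.sub_add_cancel hp.le, Nat.stirlingSecond_self, Nat.sub_self, Nat.ascFactorial_zero]
    · simp
    · intro k hk hne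
      rw [Nat.stirlingSecond_eq_zero_of_lt (by simp only [mem_Icc] at hk; omega), Nat.cast_zero,
        mul_zero]

theorem sum_pow_mul_bell {r : ℕ} (hr : 0 < r) (hrp : r < p) :
    ∑ k ∈ Icc 1 (p - 1), (r : ZMod p) ^ (p - 1 - k) * bell (k + 1) =
      ∑ s ∈ range (p + 1), (r.ascFactorial s : ZMod p) := by
  calc ∑ k ∈ Icc 1 (p - 1), (r : ZMod p) ^ (p - 1 - k) * bell (k + 1)
      = ∑ k ∈ Icc 1 (p - 1), ∑ j ∈ range (p + 1),
          (r : ZMod p) ^ (p - 1 - k) * Nat.stirlingSecond (k + 1) j :=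
        sum_congr rfl fun k hk => by
          rw [bell_eq_sum_range_stirlingSecond (N := p) (by simp only [mem_Icc] at hk; omega),
            Nat.cast_sum, mul_sum]
    _ = ∑ j ∈ range (p + 1), (r.ascFactorial (p - j) : ZMod p) := by
        rw [sum_comm]
        exact sum_congr rfl fun j hj =>
          sum_pow_mul_stirlingSecond hr hrp (by simp only [mem_range] at hj; omega)
    _ = _ := sum_range_reflect (fun s => (r.ascFactorial s : ZMod p)) (p + 1)

end ZModPrime

theorem neg_one_pow_mul_numDerangements_eq_sum_descFactorial (m : ℕ) :
    (-1) ^ m * (numDerangements m : ℤ) =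
      ∑ s ∈ range (m + 1), (-1) ^ s * (m.descFactorial s : ℤ) := by
  induction m with
  | zero => simp
  | succ m ih =>
    have hsign : ((-1 : ℤ) ^ m) ^ 2 = 1 := by rw [← pow_mul, mul_comm, pow_mul, neg_one_sq, one_pow]
    rw [sum_range_succ', numDerangements_succ]
    have hsum : ∑ s ∈ range (m + 1), (-1) ^ (s + 1) * ((m + 1).descFactorial (s + 1) : ℤ) =
        -(m + 1) * ∑ s ∈ range (m + 1), (-1) ^ s * (m.descFactorial s : ℤ) := by
      rw [mul_sum]
      refine sum_congr rfl fun s _ => ?_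
      rw [Nat.succ_descFactorial_succ]
      push_cast
      ring
    rw [hsum, ← ih, Nat.descFactorial_zero]
    linear_combination hsign

theorem neg_one_pow_mul_numDerangements_eq_sum_ascFactorial {p m r : ℕ} (hr : (r : ZMod p) = -m)
    (hrp : r ≤ p) (hm : p - r ≤ m) :
    (-1) ^ m * (numDerangements m : ZMod p) = ∑ s ∈ range (p + 1), (r.ascFactorial s : ZMod p) := by
  have hterm (s : ℕ) : (-1) ^ s * (m.descFactorial s : ZMod p) = r.ascFactorial s := by
    rw [← descPochhammer_eval_eq_descFactorial, ← ascPochhammer_eval_neg_eq_descPochhammer, ← hr,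
      ascPochhammer_nat_eq_natCast_ascFactorial]
  have htrunc {N : ℕ} (hN : p - r ≤ N) : ∑ s ∈ range (N + 1), (r.ascFactorial s : ZMod p) =
      ∑ s ∈ range (p - r + 1), (r.ascFactorial s : ZMod p) :=
    (sum_subset (range_subset_range.mpr (by omega)) fun s _ hs =>
      (ZMod.natCast_eq_zero_iff _ p).mpr
        (Nat.dvd_ascFactorial_of_le_of_lt hrp (by simp only [mem_range] at hs; omega))).symm
  have h := congrArg (Int.cast : ℤ → ZMod p)
    (neg_one_pow_mul_numDerangements_eq_sum_descFactorial m)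
  push_cast at h
  rw [h]
  simp only [hterm]
  rw [htrunc hm, htrunc (N := p) (by omega)]

theorem sun_zagier_n1_general (m p : ℕ) (hp : p.Prime) (hpm : ¬ p ∣ m) :
    (∑ k ∈ Icc 1 (p - 1), (-(m : ℤ)) ^ (p - 1 - k) * bell (k + 1)) ≡
      (-1) ^ m * (numDerangements m : ℤ) [ZMOD p] := by
  have := Fact.mk hp
  have hmod : 0 < m % p := Nat.pos_of_ne_zero fun h => hpm (Nat.dvd_of_mod_eq_zero h)
  have hmodp : m % p < p := Nat.mod_lt m hp.pos
  have hmodm : m % p ≤ m := Nat.mod_le m p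
  have hr : ((p - m % p : ℕ) : ZMod p) = -m := by
    rw [Nat.cast_sub hmodp.le, ZMod.natCast_self, ZMod.natCast_mod, zero_sub]
  rw [← ZMod.intCast_eq_intCast_iff]
  push_cast
  rw [← hr, sum_pow_mul_bell (by omega) (by omega),
    neg_one_pow_mul_numDerangements_eq_sum_ascFactorial hr (by omega) (by omega)]

theorem sun_zagier_n1 (m p : ℕ) (hm : 1 ≤ m) (hp : p.Prime) (hpm : ¬ p ∣ m) :
    (∑ k ∈ Icc 1 (p - 1), (-(m : ℤ)) ^ (p - 1 - k) * bell (k + 1)) ≡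
      (-1) ^ m * (numDerangements m : ℤ) [ZMOD p] :=
  sun_zagier_n1_general m p hp hpm
end
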